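/- arXiv:2010.05000 — 4 statements merged into one kernel-verified Lean document; each statement's English description precedes it below -/
import Mathlib

section
/- In the commuting graph Δ(B_n) (n ≥ 2), every idempotent vertex (i,i) has degree (n−1)², and every non-idempotent vertex (i,j) with i ≠ j has degree n(n−2). -/
/-- Multiplication of nonzero elements of the Brandt semigroup `B_n`:
`(i,j)·(k,l) = (i,l)` if `j = k`, and `0` (here `none`) otherwise. -/
def brandtMul {n : ℕ} (x y : Fin n × Fin n) : Option (Fin n × Fin n) :=
  if x.2 = y.1 then some (x.1, y.2) else none

/-- The commuting graph of the Brandt semigroup `B_n`. -/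
def brandtGraph (n : ℕ) : SimpleGraph (Fin n × Fin n) where
  Adj x y := x ≠ y ∧ brandtMul x y = brandtMul y x
  symm := by constructor; intro x y h; exact ⟨h.1.symm, h.2.symm⟩
  loopless := by constructor; intro x h; exact h.1 rfl

instance {n : ℕ} : DecidableRel (brandtGraph n).Adj :=
  fun x y => decidable_of_iff (x ≠ y ∧ brandtMul x y = brandtMul y x) Iff.rfl

/-!
For `x = (i,j)` and `y = (k,l)` the products `xy` and `yx` can only be `(i,l)` and `(k,j)`,
which coincide only when `x = y = (i,i)`. So distinct vertices commute exactly when both products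
vanish, i.e. `k ≠ j` and `l ≠ i`: the neighbours of `(i,j)` are `([n] ∖ {j}) × ([n] ∖ {i})`,
a set of size `(n-1)²`, less `(i,j)` itself, which belongs to it iff `i ≠ j`.
-/

open Finset

lemma brandtGraph_adj {n : ℕ} {x y : Fin n × Fin n} :
    (brandtGraph n).Adj x y ↔ x ≠ y ∧ y.1 ≠ x.2 ∧ y.2 ≠ x.1 := by
  obtain ⟨i, j⟩ := x
  obtain ⟨k, l⟩ := y
  simp only [brandtGraph, brandtMul]
  split_ifs <;> aesop

lemma brandtGraph_neighborFinset {n : ℕ} (x : Fin n × Fin n) :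
    (brandtGraph n).neighborFinset x =
      (({x.2}ᶜ : Finset (Fin n)) ×ˢ ({x.1}ᶜ : Finset (Fin n))).erase x := by
  ext y
  simp [brandtGraph_adj, and_comm, eq_comm]

lemma card_compl_singleton_product {α : Type*} [Fintype α] [DecidableEq α] (a b : α) :
    #(({a}ᶜ : Finset α) ×ˢ ({b}ᶜ : Finset α)) = (Fintype.card α - 1) ^ 2 := by
  simp only [card_product, card_compl, card_singleton, sq]

lemma sub_one_sq_sub_one (n : ℕ) : (n - 1) ^ 2 - 1 = n * (n - 2) := by
  rcases n with _ | _ | m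
  · rfl
  · rfl
  · rw [Nat.add_sub_cancel, show m + 1 + 1 - 2 = m by omega, Nat.sub_eq_of_eq_add]
    ring

theorem brandt_degree_general (n : ℕ) :
    (∀ i : Fin n, (brandtGraph n).degree (i, i) = (n - 1) ^ 2) ∧
    (∀ i j : Fin n, i ≠ j → (brandtGraph n).degree (i, j) = n * (n - 2)) := by
  refine ⟨fun i => ?_, fun i j hij => ?_⟩
  · rw [← SimpleGraph.card_neighborFinset_eq_degree, brandtGraph_neighborFinset,
      erase_eq_of_notMem (by simp), card_compl_singleton_product, Fintype.card_fin]
  · rw [← SimpleGraph.card_neighborFinset_eq_degree, brandtGraph_neighborFinset,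
      card_erase_of_mem (by simp [hij, hij.symm]), card_compl_singleton_product, Fintype.card_fin,
      sub_one_sq_sub_one]

theorem brandt_degree (n : ℕ) (hn : 2 ≤ n) :
    (∀ i : Fin n, (brandtGraph n).degree (i, i) = (n - 1) ^ 2) ∧
    (∀ i j : Fin n, i ≠ j → (brandtGraph n).degree (i, j) = n * (n - 2)) :=
  brandt_degree_general n
end

section
/- For n ≥ 3, the commuting graph Δ(B_n) is Hamiltonian: it contains a cycle passing through all n² vertices. -/
/-!
The off-diagonal vertices `(r, c)`, `c ≠ r`, of a row pairwise commute, and a diagonal vertex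
`(x, x)` commutes with `(r, c)` as soon as `x ∉ {r, c}`. Hence, for `n ≥ 3` and indices mod `n`,
a Hamiltonian cycle runs through the blocks `r = 0, 1, …, n - 1`, block `r` being the diagonal
vertex `(r + 1, r + 1)` followed by row `r` read leftwards from the diagonal,
`(r, r - 1), (r, r - 2), …, (r, r + 1)`: the last vertex `(r, r + 1)` of a block commutes with the
first vertex `(r + 2, r + 2)` of the next one.
-/

namespace SimpleGraph

variable {V : Type*} {G : SimpleGraph V}

theorem isHamiltonian_of_bijective_hom_cycleGraph [Fintype V] [DecidableEq V] {N : ℕ}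
    (hN : 3 ≤ N) (f : cycleGraph N →g G) (hf : Function.Bijective f) : G.IsHamiltonian := by
  intro _
  obtain ⟨m, rfl⟩ : ∃ m, N = m + 3 := ⟨N - 3, by omega⟩
  refine ⟨_, (cycleGraph.cycle m).map f, Walk.isHamiltonianCycle_iff_isCycle_and_length_eq.mpr
    ⟨cycleGraph.isCycle_cycle.map hf.injective, ?_⟩⟩
  rw [Walk.length_map, cycleGraph.length_cycle, ← Fintype.card_of_bijective hf, Fintype.card_fin]

def cycleGraph.homOfAdjAddOne {N : ℕ} [NeZero N] (f : Fin N → V)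
    (hf : ∀ i, G.Adj (f i) (f (i + 1))) : cycleGraph N →g G where
  toFun := f
  map_rel' {i j} h := by
    have eq_one {k : Fin N} (hk : k.val = 1) : k = 1 := by
      ext; rw [hk, Fin.val_one', Nat.mod_eq_of_lt (by omega)]
    rcases cycleGraph_adj'.mp h with h | h
    · rw [sub_eq_iff_eq_add'.mp (eq_one h)]
      exact (hf j).symm
    · rw [sub_eq_iff_eq_add'.mp (eq_one h)]
      exact hf i

end SimpleGraph

def Fin.lexSucc {m n : ℕ} [NeZero m] [NeZero n] (p : Fin m × Fin n) : Fin m × Fin n :=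
  if p.2 + 1 = 0 then (p.1 + 1, 0) else (p.1, p.2 + 1)

theorem finProdFinEquiv_lexSucc {m n : ℕ} [NeZero m] [NeZero n] (p : Fin m × Fin n) :
    finProdFinEquiv (Fin.lexSucc p) = finProdFinEquiv p + 1 := by
  obtain ⟨m, rfl⟩ := Nat.exists_eq_add_one_of_ne_zero (NeZero.ne m)
  obtain ⟨n, rfl⟩ := Nat.exists_eq_add_one_of_ne_zero (NeZero.ne n)
  obtain ⟨r, t⟩ := p
  ext
  rw [Fin.val_add, Fin.val_one', Nat.add_mod_mod, finProdFinEquiv_apply_val]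
  unfold Fin.lexSucc
  by_cases ht : t = Fin.last n
  · subst ht
    rw [if_pos (by simp), finProdFinEquiv_apply_val, Fin.val_zero, Fin.val_add_one, zero_add,
      Fin.val_last, show n + (n + 1) * r + 1 = (n + 1) * (r + 1) by ring]
    by_cases hr : r = Fin.last m
    · rw [if_pos hr, hr, Fin.val_last, mul_zero, mul_comm, Nat.mod_self]
    · have := Fin.val_lt_last hr
      rw [if_neg hr, Nat.mod_eq_of_lt (by nlinarith)]
  · have t_succ := Fin.val_add_one_of_lt (Fin.lt_last_iff_ne_last.mpr ht)
    have := Fin.val_lt_last ht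
    rw [if_neg (fun h => by simp [h] at t_succ), finProdFinEquiv_apply_val, t_succ,
      Nat.mod_eq_of_lt (by nlinarith [r.isLt]), add_right_comm]

section Brandt

variable {n : ℕ}

theorem brandtGraph_adj_iff {x y : Fin n × Fin n} :
    (brandtGraph n).Adj x y ↔ x ≠ y ∧ x.2 ≠ y.1 ∧ y.2 ≠ x.1 := by
  obtain ⟨a, b⟩ := x
  obtain ⟨c, d⟩ := y
  simp only [brandtGraph, brandtMul]
  split_ifs <;> aesop

theorem brandtGraph_adj_diag {x r c : Fin n} (hr : x ≠ r) (hc : x ≠ c) :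
    (brandtGraph n).Adj (x, x) (r, c) :=
  brandtGraph_adj_iff.mpr ⟨fun h => hr (Prod.ext_iff.mp h).1, hr, hc.symm⟩

theorem brandtGraph_adj_row {r c c' : Fin n} (hc : c ≠ r) (hc' : c' ≠ r) (hcc' : c ≠ c') :
    (brandtGraph n).Adj (r, c) (r, c') :=
  brandtGraph_adj_iff.mpr ⟨fun h => hcc' (Prod.ext_iff.mp h).2, hc, hc'⟩

variable [NeZero n]

def brandtCycleEquiv : Fin n × Fin n ≃ Fin n × Fin n where
  toFun p := if p.2 = 0 then (p.1 + 1, p.1 + 1) else (p.1, p.1 - p.2)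
  invFun x := if x.1 = x.2 then (x.1 - 1, 0) else (x.1, x.1 - x.2)
  left_inv := by
    rintro ⟨r, t⟩
    by_cases ht : t = 0
    · simp [ht]
    · have : r ≠ r - t := fun h => ht (sub_eq_self.mp h.symm)
      simp [ht, this]
  right_inv := by
    rintro ⟨a, b⟩
    by_cases hab : a = b
    · simp [hab]
    · have : a - b ≠ 0 := sub_ne_zero.mpr hab
      simp [hab, this]

open Fin.CommRing in
theorem brandtGraph_adj_brandtCycleEquiv_lexSucc (hn : 3 ≤ n) (p : Fin n × Fin n) :
    (brandtGraph n).Adj (brandtCycleEquiv p) (brandtCycleEquiv (Fin.lexSucc p)) := by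
  have one_ne : (1 : Fin n) ≠ 0 := by simp [Fin.ext_iff]; omega
  have two_ne : (2 : Fin n) ≠ 0 := by simp [Fin.ext_iff, Nat.mod_eq_of_lt (show 2 < n by omega)]
  obtain ⟨r, t⟩ := p
  by_cases hlast : t + 1 = 0
  · have ht0 : t ≠ 0 := by rintro rfl; exact one_ne (by simpa using hlast)
    simp only [Fin.lexSucc, brandtCycleEquiv, Equiv.coe_fn_mk, hlast, ht0, ↓reduceIte]
    refine (brandtGraph_adj_diag ?_ ?_).symm
    · exact fun h => two_ne (by linear_combination h)
    · exact fun h => one_ne (by linear_combination h - hlast)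
  · by_cases ht0 : t = 0
    · subst ht0
      simp only [Fin.lexSucc, brandtCycleEquiv, Equiv.coe_fn_mk, zero_add, one_ne, ↓reduceIte]
      refine brandtGraph_adj_diag ?_ ?_
      · exact fun h => one_ne (by linear_combination h)
      · exact fun h => two_ne (by linear_combination h)
    · simp only [Fin.lexSucc, brandtCycleEquiv, Equiv.coe_fn_mk, hlast, ht0, ↓reduceIte]
      refine brandtGraph_adj_row ?_ ?_ ?_
      · exact fun h => ht0 (sub_eq_self.mp h)
      · exact fun h => hlast (sub_eq_self.mp h)
      · exact fun h => one_ne (by linear_combination h)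

end Brandt

theorem brandt_hamiltonian (n : ℕ) (hn : 3 ≤ n) :
    (brandtGraph n).IsHamiltonian := by
  have : NeZero n := ⟨by omega⟩
  refine SimpleGraph.isHamiltonian_of_bijective_hom_cycleGraph (N := n * n) (by nlinarith)
    (SimpleGraph.cycleGraph.homOfAdjAddOne (brandtCycleEquiv ∘ finProdFinEquiv.symm) fun k => ?_)
    (brandtCycleEquiv.bijective.comp finProdFinEquiv.symm.bijective)
  obtain ⟨p, rfl⟩ := finProdFinEquiv.surjective k
  simp only [Function.comp_apply, ← finProdFinEquiv_lexSucc, Equiv.symm_apply_apply]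
  exact brandtGraph_adj_brandtCycleEquiv_lexSucc hn p
end

section
/- For n ≥ 2, if A and B are disjoint nonempty subsets of [n], then A × B is a clique in the commuting graph Δ(B_n) containing no idempotent, i.e., any two distinct elements (a,b), (c,d) with a,c ∈ A and b,d ∈ B commute in B_n. -/
theorem brandtMul_eq_none {n : ℕ} {x y : Fin n × Fin n} (h : x.2 ≠ y.1) :
    brandtMul x y = none :=
  if_neg h

theorem brandtGraph_adj_of_ne {n : ℕ} {x y : Fin n × Fin n} (hxy : x ≠ y)
    (hxy' : x.2 ≠ y.1) (hyx : y.2 ≠ x.1) : (brandtGraph n).Adj x y :=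
  ⟨hxy, by rw [brandtMul_eq_none hxy', brandtMul_eq_none hyx]⟩

theorem brandtGraph_isClique_prod {n : ℕ} {A B : Set (Fin n)} (hAB : Disjoint A B) :
    (brandtGraph n).IsClique (A ×ˢ B) := fun _ hx _ hy hxy =>
  brandtGraph_adj_of_ne hxy (hAB.ne_of_mem hy.1 hx.2).symm (hAB.ne_of_mem hx.1 hy.2).symm

theorem brandt_prod_clique_general (n : ℕ) (A B : Set (Fin n))
    (hAB : Disjoint A B) :
    (brandtGraph n).IsClique (A ×ˢ B) ∧ ∀ p ∈ A ×ˢ B, p.1 ≠ p.2 :=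
  ⟨brandtGraph_isClique_prod hAB, fun _ hp => hAB.ne_of_mem hp.1 hp.2⟩

theorem brandt_prod_clique (n : ℕ) (hn : 2 ≤ n) (A B : Set (Fin n))
    (hA : A.Nonempty) (hB : B.Nonempty) (hAB : Disjoint A B) :
    (brandtGraph n).IsClique (A ×ˢ B) ∧ ∀ p ∈ A ×ˢ B, p.1 ≠ p.2 :=
  brandt_prod_clique_general n A B hAB
end

section
/- For n ≥ 2, any clique K in the commuting graph Δ(B_n) containing no idempotent element satisfies |K| ≤ n²/4 if n is even, and |K| ≤ (n² − 1)/4 if n is odd. Equivalently, |K| ≤ ⌊n²/4⌋. -/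
/-!
If `(i,j)` and `(k,l)` commute and `j = k`, then also `l = i` and the two elements coincide.
Hence in a clique without idempotents no row index equals a column index: the rows `A` and
the columns `B` used by the clique are disjoint subsets of `[n]`, the clique lies in `A × B`,
and `|A| |B| ≤ ⌊(|A| + |B|)² / 4⌋ ≤ ⌊n² / 4⌋`.
-/

theorem Nat.mul_le_sq_div_four_of_add_le {a b n : ℕ} (h : a + b ≤ n) : a * b ≤ n ^ 2 / 4 := by
  rw [Nat.le_div_iff_mul_le four_pos]
  nlinarith [sq_nonneg ((a : ℤ) - b), Nat.mul_le_mul h h]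

theorem Set.ncard_le_sq_div_four_of_disjoint_fst_snd {α : Type*} [Finite α] {K : Set (α × α)}
    (h : Disjoint (Prod.fst '' K) (Prod.snd '' K)) : K.ncard ≤ Nat.card α ^ 2 / 4 := by
  have hsub : K ⊆ (Prod.fst '' K) ×ˢ (Prod.snd '' K) := fun p hp =>
    ⟨Set.mem_image_of_mem _ hp, Set.mem_image_of_mem _ hp⟩
  have hsum : (Prod.fst '' K).ncard + (Prod.snd '' K).ncard ≤ Nat.card α := by
    rw [← Set.ncard_union_eq h]
    exact Set.ncard_le_card _
  calc K.ncard ≤ ((Prod.fst '' K) ×ˢ (Prod.snd '' K)).ncard := Set.ncard_le_ncard hsub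
    _ = (Prod.fst '' K).ncard * (Prod.snd '' K).ncard := Set.ncard_prod
    _ ≤ Nat.card α ^ 2 / 4 := Nat.mul_le_sq_div_four_of_add_le hsum

theorem brandtGraph.snd_ne_fst_of_adj {n : ℕ} {x y : Fin n × Fin n} (h : (brandtGraph n).Adj x y) :
    y.2 ≠ x.1 := by
  intro hyx
  obtain ⟨hne, hcomm⟩ := h
  by_cases hxy : x.2 = y.1
  · simp only [brandtMul, if_pos hxy, if_pos hyx, Option.some.injEq, Prod.mk.injEq] at hcomm
    exact hne (Prod.ext hcomm.1 hcomm.2.symm)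
  · simp [brandtMul, if_neg hxy, if_pos hyx] at hcomm

theorem brandtGraph.disjoint_fst_snd_of_isClique {n : ℕ} {K : Set (Fin n × Fin n)}
    (hK : (brandtGraph n).IsClique K) (hid : ∀ p ∈ K, p.1 ≠ p.2) :
    Disjoint (Prod.fst '' K) (Prod.snd '' K) := by
  rw [Set.disjoint_left]
  rintro _ ⟨p, hp, rfl⟩ ⟨q, hq, hqp⟩
  by_cases hpq : p = q
  · subst hpq
    exact hid p hp hqp.symm
  · exact snd_ne_fst_of_adj (hK hp hq hpq) hqp

theorem brandt_clique_bound_general (n : ℕ) (K : Set (Fin n × Fin n))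
    (hK : (brandtGraph n).IsClique K) (hid : ∀ p ∈ K, p.1 ≠ p.2) :
    K.ncard ≤ n ^ 2 / 4 := by
  simpa using Set.ncard_le_sq_div_four_of_disjoint_fst_snd
    (brandtGraph.disjoint_fst_snd_of_isClique hK hid)

theorem brandt_clique_bound (n : ℕ) (hn : 2 ≤ n) (K : Set (Fin n × Fin n))
    (hK : (brandtGraph n).IsClique K) (hid : ∀ p ∈ K, p.1 ≠ p.2) :
    K.ncard ≤ n ^ 2 / 4 :=
  brandt_clique_bound_general n K hK hid
end
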